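/- Let n ∈ ℕ and 0 ≤ k with 2k < n, and let (x_k,…,x_{n−k}) be a symmetric Jordan chain in V(B(n)) with r(x_l) = l (so U_0(x_l) = x_{l+1} for k ≤ l < n−k and U_0(x_{n−k}) = 0). Identify V(B(n)) with the span V(0) in V(B(n+1)) of subsets not containing n+1, and let R : V(0) → V(B(n+1)), written R(v) = v̄, be the linear map induced by X ↦ X ∪ {n+1}. Define z_l = (n−k−l+1)·x̄_{l−1} − x_l for k+1 ≤ l ≤ n−k. Then, with U the up operator of V(B(n+1)): each z_l is nonzero of rank l, U(z_l) = z_{l+1} for k+1 ≤ l < n−k, and U(z_{n−k}) = 0; hence (z_{k+1},…,z_{n−k}) is a symmetric Jordan chain in V(B(n+1)). -/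

import Mathlib

/-- `V n` is the complex vector space with basis `B(n)`, the set of all
subsets of `[n] = {1, …, n}` (modeled as `Finset (Fin n)`). -/
abbrev V (n : ℕ) : Type := Finset (Fin n) →₀ ℂ

/-- `V(B(n)_k)`: the span of the `k`-subsets of `[n]`, i.e. the elements of
`V n` supported on subsets of cardinality `k`. -/
noncomputable def rankSubmodule (n k : ℕ) : Submodule ℂ (V n) :=
  Finsupp.supported ℂ ℂ {X : Finset (Fin n) | X.card = k}

/-- The up operator `U : V(B(n)) → V(B(n))`, defined on a basis element `X` by
`U(X) = Σ_Y Y`, the sum over all `Y ⊆ [n]` with `X ⊆ Y` and `|Y| = |X| + 1`. -/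
noncomputable def upMap (n : ℕ) : V n →ₗ[ℂ] V n :=
  Finsupp.lift (V n) ℂ (Finset (Fin n)) fun X =>
    ∑ Y ∈ Finset.univ.filter (fun Y : Finset (Fin n) => X ⊆ Y ∧ Y.card = X.card + 1),
      Finsupp.single Y (1 : ℂ)

/-- `IsSJC n k h v` : `(v 0, v 1, …, v (h-1))` is a symmetric Jordan chain in
`V(B(n))`: a sequence of `h ≥ 1` nonzero homogeneous elements, `v i` of rank
`k + i`, with `U (v i) = v (i+1)`, `U (v (h-1)) = 0`, and the symmetry condition
`r(v_1) + r(v_h) = n` (which for `h = 1` reads `2 r(v_1) = n`). -/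
def IsSJC (n k h : ℕ) (v : ℕ → V n) : Prop :=
  1 ≤ h ∧
  (∀ i < h, v i ≠ 0 ∧ v i ∈ rankSubmodule n (k + i)) ∧
  (∀ i, i + 1 < h → upMap n (v i) = v (i + 1)) ∧
  upMap n (v (h - 1)) = 0 ∧
  k + (k + (h - 1)) = n

/-- The inclusion `V(B(n)) ≃ V(0) ⊆ V(B(n+1))` induced by regarding a subset of
`[n]` as a subset of `[n+1]` not containing `n+1`. -/
noncomputable def inclMap (n : ℕ) : V n →ₗ[ℂ] V (n + 1) :=
  Finsupp.lmapDomain ℂ ℂ (fun X : Finset (Fin n) =>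
    X.map ⟨Fin.castSucc, Fin.castSucc_injective n⟩)

/-- The map `R : V(0) → V(B(n+1))`, `R(v) = v̄`, induced by
`X ↦ X ∪ {n+1}` for `X ⊆ [n]` (here `V(0) ≅ V(B(n))`). -/
noncomputable def barMap (n : ℕ) : V n →ₗ[ℂ] V (n + 1) :=
  Finsupp.lmapDomain ℂ ℂ (fun X : Finset (Fin n) =>
    insert (Fin.last n) (X.map ⟨Fin.castSucc, Fin.castSucc_injective n⟩))

/-!
Split `V(B(n+1))` into the span of the sets without `n+1` (the image of `inclMap`) and of the
sets with `n+1` (the image of `barMap`). An upper cover of `X ⊆ [n]` in `[n+1]` either adds an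
element of `[n]` or adds `n+1`, while every upper cover of `X ∪ {n+1}` adds an element of `[n]`;
so `U(v) = U₀(v) + v̄` and `U(v̄) = (U₀ v)‾`. Consequently
`U(c·x̄_{l-1} - x_l) = (c - 1)·x̄_l - x_{l+1}`, which is `z_{l+1}` for `c = n-k-l+1` and `0`
at the top `l = n-k`. Each `z_l` is nonzero because its component without `n+1` is `-x_l`.
-/

open Finset

theorem upMap_single (n : ℕ) (X : Finset (Fin n)) (c : ℂ) :
    upMap n (Finsupp.single X c) = ∑ a ∈ Xᶜ, Finsupp.single (insert a X) c := by
  have hcovers : univ.filter (fun Y : Finset (Fin n) => X ⊆ Y ∧ Y.card = X.card + 1) =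
      Xᶜ.image (insert · X) := by
    ext Y
    simp only [mem_filter, mem_univ, true_and, mem_image, mem_compl]
    exact (exists_eq_insert_iff.trans (and_congr_right' eq_comm)).symm
  rw [upMap, Finsupp.lift_apply, Finsupp.sum_single_index (by simp), hcovers,
    sum_image fun a ha b hb h => by simpa using (insert_inj (by simpa using ha)).mp h,
    smul_sum]
  simp [Finsupp.smul_single]

theorem compl_map_castSuccEmb (n : ℕ) (X : Finset (Fin n)) :
    (X.map Fin.castSuccEmb)ᶜ = cons (Fin.last n) (Xᶜ.map Fin.castSuccEmb) (by simp) := by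
  ext a
  cases a using Fin.lastCases <;> simp

theorem compl_insert_last_map_castSuccEmb (n : ℕ) (X : Finset (Fin n)) :
    (insert (Fin.last n) (X.map Fin.castSuccEmb))ᶜ = Xᶜ.map Fin.castSuccEmb := by
  ext a
  cases a using Fin.lastCases <;> simp

theorem inclMap_single (n : ℕ) (X : Finset (Fin n)) (c : ℂ) :
    inclMap n (Finsupp.single X c) = Finsupp.single (X.map Fin.castSuccEmb) c :=
  Finsupp.mapDomain_single

theorem barMap_single (n : ℕ) (X : Finset (Fin n)) (c : ℂ) :
    barMap n (Finsupp.single X c) =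
      Finsupp.single (insert (Fin.last n) (X.map Fin.castSuccEmb)) c :=
  Finsupp.mapDomain_single

theorem upMap_inclMap (n : ℕ) (v : V n) :
    upMap (n + 1) (inclMap n v) = inclMap n (upMap n v) + barMap n v := by
  suffices (upMap (n + 1)).comp (inclMap n) = (inclMap n).comp (upMap n) + barMap n from
    LinearMap.congr_fun this v
  refine Finsupp.lhom_ext fun X c => ?_
  simp only [LinearMap.comp_apply, LinearMap.add_apply, inclMap_single, barMap_single,
    upMap_single, compl_map_castSuccEmb, sum_cons, sum_map, map_sum, map_insert]
  exact add_comm _ _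

theorem upMap_barMap (n : ℕ) (v : V n) :
    upMap (n + 1) (barMap n v) = barMap n (upMap n v) := by
  suffices (upMap (n + 1)).comp (barMap n) = (barMap n).comp (upMap n) from
    LinearMap.congr_fun this v
  refine Finsupp.lhom_ext fun X c => ?_
  simp only [LinearMap.comp_apply, barMap_single, upMap_single, compl_insert_last_map_castSuccEmb, sum_map, map_sum, map_insert, insert_comm]

theorem inclMap_mem_rankSubmodule {n m : ℕ} {v : V n} (hv : v ∈ rankSubmodule n m) :
    inclMap n v ∈ rankSubmodule (n + 1) m :=
  Finsupp.supported_comap_lmapDomain ℂ ℂ _ _ (by simpa [rankSubmodule] using hv)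

theorem barMap_mem_rankSubmodule {n m : ℕ} {v : V n} (hv : v ∈ rankSubmodule n m) :
    barMap n v ∈ rankSubmodule (n + 1) (m + 1) :=
  Finsupp.supported_comap_lmapDomain ℂ ℂ _ _ (by simpa [rankSubmodule] using hv)

theorem inclMap_apply_map_castSuccEmb (n : ℕ) (v : V n) (X : Finset (Fin n)) :
    inclMap n v (X.map Fin.castSuccEmb) = v X :=
  Finsupp.mapDomain_apply (map_injective _) v X

theorem barMap_apply_of_last_notMem (n : ℕ) (v : V n) {Y : Finset (Fin (n + 1))}
    (hY : Fin.last n ∉ Y) : barMap n v Y = 0 :=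
  Finsupp.mapDomain_of_notMem_range _ _ (by rintro ⟨X, rfl⟩; exact hY (mem_insert_self _ _))

theorem smul_barMap_sub_inclMap_ne_zero (n : ℕ) (c : ℂ) (w : V n) {v : V n} (hv : v ≠ 0) :
    c • barMap n w - inclMap n v ≠ 0 := by
  obtain ⟨X, hX⟩ := Finsupp.ne_iff.mp hv
  intro h
  exact hX (by simpa [inclMap_apply_map_castSuccEmb, barMap_apply_of_last_notMem] using
    DFunLike.congr_fun h (X.map Fin.castSuccEmb))

theorem isSJC_of_chain {n a b h : ℕ} {v : ℕ → V n} (hab : a + h = b + 1) (hh : 1 ≤ h)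
    (hsymm : a + b = n)
    (hmem : ∀ l, a ≤ l → l ≤ b → v l ≠ 0 ∧ v l ∈ rankSubmodule n l)
    (hup : ∀ l, a ≤ l → l < b → upMap n (v l) = v (l + 1))
    (htop : upMap n (v b) = 0) :
    IsSJC n a h (fun i => v (a + i)) := by
  refine ⟨hh, fun i hi => hmem _ (by omega) (by omega), fun i hi => hup _ (by omega) (by omega),
    ?_, by omega⟩
  show upMap n (v (a + (h - 1))) = 0
  rwa [show a + (h - 1) = b by omega]

theorem upMap_smul_barMap_sub_inclMap (n : ℕ) (c : ℂ) (w v : V n) :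
    upMap (n + 1) (c • barMap n w - inclMap n v) =
      c • barMap n (upMap n w) - barMap n v - inclMap n (upMap n v) := by
  rw [map_sub, map_smul, upMap_barMap, upMap_inclMap]
  abel

/-- **Theorem.** Let `2k < n` and `(x_k, …, x_{n−k})` be a symmetric Jordan chain in
`V(B(n))` with `r(x_l) = l`. Set `z_l = (n−k−l+1)·x̄_{l−1} − x_l` for `k+1 ≤ l ≤ n−k`.
Then each `z_l` is nonzero of rank `l`, `U(z_l) = z_{l+1}` for `k+1 ≤ l < n−k`, and
`U(z_{n−k}) = 0`; hence `(z_{k+1}, …, z_{n−k})` is an SJC in `V(B(n+1))`. -/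
theorem z_chain_is_sjc (n k : ℕ) (hk : 2 * k < n) (x : ℕ → V n)
    (hne : ∀ l, k ≤ l → l ≤ n - k → x l ≠ 0)
    (hrank : ∀ l, k ≤ l → l ≤ n - k → x l ∈ rankSubmodule n l)
    (hup : ∀ l, k ≤ l → l < n - k → upMap n (x l) = x (l + 1))
    (htop : upMap n (x (n - k)) = 0)
    (z : ℕ → V (n + 1))
    (hz : ∀ l, k + 1 ≤ l → l ≤ n - k →
      z l = ((n - k - l + 1 : ℕ) : ℂ) • barMap n (x (l - 1)) - inclMap n (x l)) :
    (∀ l, k + 1 ≤ l → l ≤ n - k → z l ≠ 0 ∧ z l ∈ rankSubmodule (n + 1) l) ∧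
    (∀ l, k + 1 ≤ l → l < n - k → upMap (n + 1) (z l) = z (l + 1)) ∧
    upMap (n + 1) (z (n - k)) = 0 ∧
    IsSJC (n + 1) (k + 1) (n - 2 * k) (fun i => z (k + 1 + i)) := by
  have hmem : ∀ l, k + 1 ≤ l → l ≤ n - k → z l ≠ 0 ∧ z l ∈ rankSubmodule (n + 1) l := by
    intro l hl hl'
    obtain ⟨l, rfl⟩ : ∃ m, l = m + 1 := ⟨l - 1, by omega⟩
    rw [hz _ hl hl', Nat.add_sub_cancel]
    exact ⟨smul_barMap_sub_inclMap_ne_zero n _ _ (hne _ (by omega) hl'),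
      sub_mem (Submodule.smul_mem _ _ (barMap_mem_rankSubmodule (hrank l (by omega) (by omega))))
        (inclMap_mem_rankSubmodule (hrank _ (by omega) hl'))⟩
  -- `U(x_l) = U₀(x_l) + x̄_l` lowers the coefficient of `x̄_l` by one
  have hupz : ∀ l, k + 1 ≤ l → l ≤ n - k →
      upMap (n + 1) (z l) = ((n - k - l : ℕ) : ℂ) • barMap n (x l) - inclMap n (upMap n (x l)) := by
    intro l hl hl'
    obtain ⟨l, rfl⟩ : ∃ m, l = m + 1 := ⟨l - 1, by omega⟩
    rw [hz _ hl hl', Nat.add_sub_cancel, upMap_smul_barMap_sub_inclMap, hup l (by omega) (by omega),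
      Nat.cast_succ, add_smul, one_smul, add_sub_cancel_right]
  have hstep : ∀ l, k + 1 ≤ l → l < n - k → upMap (n + 1) (z l) = z (l + 1) := by
    intro l hl hl'
    rw [hupz l hl hl'.le, hz (l + 1) (by omega) hl', hup l (by omega) hl', Nat.add_sub_cancel,
      show n - k - (l + 1) + 1 = n - k - l by omega]
  have htopz : upMap (n + 1) (z (n - k)) = 0 := by
    rw [hupz _ (by omega) le_rfl, htop, Nat.sub_self]
    simp
  exact ⟨hmem, hstep, htopz,
    isSJC_of_chain (by omega) (by omega) (by omega) hmem hstep htopz⟩
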